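/- Let X be a finite set with at least two elements, let μ and ν be two distinct probability measures on X (given by nonnegative weight functions summing to 1, viewed as additive normalized capacities), and let D = {(x,x) : x ∈ X} ⊆ X × X be the diagonal. Then π_*(Dᶜ) = 0, where π_*(N) = max(μ(Ñ_X), ν(Ñ_Y)) for N ⊆ X × X, yet every coupling w ∈ Π_a(μ,ν) satisfies w(Dᶜ) > 0. In particular, since C(π_*) = Π_a(μ,ν), the capacity π_* is not exact: there is a nonempty set S (namely S = Dᶜ) such that no element p of C(π_*) satisfies p(S) = π_*(S). -/

import Mathlib

/-!
Every core element `p` of `π_*` dominates `π_*` on the rows `{x} × X` and the columns `X × {y}`,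
whose full-fiber projections are `{x}` and `{y}`, so its marginals dominate `μ` and `ν`; as its
total mass is `1`, the marginals are exactly `μ` and `ν`, i.e. `C(π_*) ⊆ Π_a(μ, ν)`. On the other
hand `Dᶜ` contains no full row and no full column, so `π_*(Dᶜ) = 0`, while a nonnegative coupling
of `μ ≠ ν` cannot be carried by the diagonal, since then both marginals would equal `x ↦ w(x, x)`.
-/

open Finset MeasureTheory

/-- A capacity on a finite set `Z`: a monotone set function vanishing on `∅`. -/
def IsCapacity {Z : Type*} (γ : Finset Z → ℝ) : Prop :=
  γ ∅ = 0 ∧ ∀ A B : Finset Z, A ⊆ B → γ A ≤ γ B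

/-- A normalized capacity: a capacity with `γ(Z) = 1`. -/
def IsNormalizedCapacity {Z : Type*} [Fintype Z] (γ : Finset Z → ℝ) : Prop :=
  IsCapacity γ ∧ γ Finset.univ = 1

/-- Membership of a capacity `π` on `X × Y` in `Π_Ch(μ, ν)`:
`π` is a capacity whose marginals are `μ` and `ν`. -/
def InPiCh {X Y : Type*} [Fintype X] [Fintype Y]
    (μ : Finset X → ℝ) (ν : Finset Y → ℝ) (π : Finset (X × Y) → ℝ) : Prop :=
  IsCapacity π ∧ (∀ A : Finset X, π (A ×ˢ Finset.univ) = μ A) ∧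
    (∀ B : Finset Y, π (Finset.univ ×ˢ B) = ν B)

/-- Projection of `N ⊆ X × Y` onto `X`. -/
def projX {X Y : Type*} [DecidableEq X] (N : Finset (X × Y)) : Finset X :=
  N.image Prod.fst

/-- Projection of `N ⊆ X × Y` onto `Y`. -/
def projY {X Y : Type*} [DecidableEq Y] (N : Finset (X × Y)) : Finset Y :=
  N.image Prod.snd

/-- Full-fiber projection of `N ⊆ X × Y` onto `X`: points `x` with `(x, y) ∈ N` for all `y`. -/
def tprojX {X Y : Type*} [Fintype X] [Fintype Y] [DecidableEq X] [DecidableEq Y]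
    (N : Finset (X × Y)) : Finset X :=
  Finset.univ.filter (fun x => ∀ y : Y, (x, y) ∈ N)

/-- Full-fiber projection of `N ⊆ X × Y` onto `Y`: points `y` with `(x, y) ∈ N` for all `x`. -/
def tprojY {X Y : Type*} [Fintype X] [Fintype Y] [DecidableEq X] [DecidableEq Y]
    (N : Finset (X × Y)) : Finset Y :=
  Finset.univ.filter (fun y => ∀ x : X, (x, y) ∈ N)

/-- Membership in the core of a capacity `γ`: a weight function `w`, identified with the
additive set function `A ↦ ∑ z ∈ A, w z`, dominating `γ` setwise and agreeing at `Z`. -/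
def InCore {Z : Type*} [Fintype Z] (γ : Finset Z → ℝ) (w : Z → ℝ) : Prop :=
  (∀ A : Finset Z, γ A ≤ ∑ z ∈ A, w z) ∧ (∑ z : Z, w z) = γ Finset.univ

/-- `w` is a coupling of the weight functions `u` and `v` (membership in `Π_a(u, v)`). -/
def InPiA {X Y : Type*} [Fintype X] [Fintype Y] (u : X → ℝ) (v : Y → ℝ)
    (w : X × Y → ℝ) : Prop :=
  (∀ x : X, (∑ y : Y, w (x, y)) = u x) ∧ (∀ y : Y, (∑ x : X, w (x, y)) = v y)

/-- The lower capacity `π_*(N) = max (μ(Ñ_X), ν(Ñ_Y))` of two weight functions. -/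
def piLower {X Y : Type*} [Fintype X] [Fintype Y] [DecidableEq X] [DecidableEq Y]
    (m : X → ℝ) (n : Y → ℝ) (N : Finset (X × Y)) : ℝ :=
  max (∑ x ∈ tprojX N, m x) (∑ y ∈ tprojY N, n y)

section FullFiberProjections

variable {X Y : Type*} [Fintype X] [Fintype Y] [DecidableEq X] [DecidableEq Y]

@[simp]
theorem tprojX_univ : tprojX (univ : Finset (X × Y)) = univ := by
  ext x; simp [tprojX]

@[simp]
theorem tprojY_univ : tprojY (univ : Finset (X × Y)) = univ := by
  ext y; simp [tprojY]

theorem tprojX_singleton_product_univ [Nonempty Y] (x : X) :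
    tprojX (({x} : Finset X) ×ˢ (univ : Finset Y)) = {x} := by
  ext x'
  simp [tprojX, eq_comm]

theorem tprojY_univ_product_singleton [Nonempty X] (y : Y) :
    tprojY ((univ : Finset X) ×ˢ ({y} : Finset Y)) = {y} := by
  ext y'
  simp [tprojY, eq_comm]

@[simp]
theorem tprojX_offDiag : tprojX (univ.offDiag : Finset (X × X)) = ∅ := by
  ext x
  simp [tprojX]

@[simp]
theorem tprojY_offDiag : tprojY (univ.offDiag : Finset (X × X)) = ∅ := by
  ext y
  simp [tprojY]

end FullFiberProjections

section LowerCapacity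

variable {X Y : Type*} [Fintype X] [Fintype Y] [DecidableEq X] [DecidableEq Y]
  {m : X → ℝ} {n : Y → ℝ} {p : X × Y → ℝ}

theorem piLower_offDiag (m n : X → ℝ) : piLower m n univ.offDiag = 0 := by
  simp [piLower]

theorem InCore.nonneg_of_piLower (hm0 : ∀ x, 0 ≤ m x) (hp : InCore (piLower m n) p)
    (z : X × Y) : 0 ≤ p z :=
  calc (0 : ℝ) ≤ ∑ x ∈ tprojX {z}, m x := sum_nonneg fun x _ => hm0 x
    _ ≤ piLower m n {z} := le_max_left _ _
    _ ≤ ∑ z' ∈ {z}, p z' := hp.1 {z}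
    _ = p z := sum_singleton _ _

theorem InCore.inPiA_of_piLower [Nonempty X] [Nonempty Y] (hmn : ∑ x, m x = ∑ y, n y)
    (hp : InCore (piLower m n) p) : InPiA m n p := by
  have htotal : ∑ z, p z = ∑ x, m x := by
    rw [hp.2, piLower, tprojX_univ, tprojY_univ, ← hmn, max_self]
  have hrow : ∀ x, m x ≤ ∑ y, p (x, y) := fun x =>
    calc m x ≤ piLower m n ({x} ×ˢ univ) := by
          rw [piLower, tprojX_singleton_product_univ, sum_singleton]; exact le_max_left _ _
      _ ≤ ∑ z ∈ {x} ×ˢ univ, p z := hp.1 _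
      _ = ∑ y, p (x, y) := by rw [sum_product, sum_singleton]
  have hcol : ∀ y, n y ≤ ∑ x, p (x, y) := fun y =>
    calc n y ≤ piLower m n (univ ×ˢ {y}) := by
          rw [piLower, tprojY_univ_product_singleton, sum_singleton]; exact le_max_right _ _
      _ ≤ ∑ z ∈ univ ×ˢ {y}, p z := hp.1 _
      _ = ∑ x, p (x, y) := by rw [sum_product]; simp only [sum_singleton]
  refine ⟨fun x => ?_, fun y => ?_⟩
  · refine ((sum_eq_sum_iff_of_le fun x _ => hrow x).1 ?_ x (mem_univ x)).symm
    rw [← htotal, Fintype.sum_prod_type]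
  · refine ((sum_eq_sum_iff_of_le fun y _ => hcol y).1 ?_ y (mem_univ y)).symm
    rw [hmn.symm.trans htotal.symm, Fintype.sum_prod_type_right]

end LowerCapacity

theorem InPiA.sum_offDiag_pos {X : Type*} [Fintype X] [DecidableEq X] {u v : X → ℝ}
    {w : X × X → ℝ} (hw0 : ∀ z, 0 ≤ w z) (hw : InPiA u v w) (huv : u ≠ v) :
    0 < ∑ z ∈ univ.offDiag, w z := by
  refine (sum_nonneg fun z _ => hw0 z).lt_of_ne fun hzero => huv (funext fun x => ?_)
  have hoff : ∀ z ∈ univ.offDiag, w z = 0 :=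
    (sum_eq_zero_iff_of_nonneg fun z _ => hw0 z).1 hzero.symm
  have hrow : ∑ y, w (x, y) = w (x, x) :=
    Fintype.sum_eq_single x fun y hy => hoff _ (by simpa using Ne.symm hy)
  have hcol : ∑ y, w (y, x) = w (x, x) :=
    Fintype.sum_eq_single x fun y hy => hoff _ (by simpa using hy)
  rw [← hw.1 x, ← hw.2 x, hrow, hcol]

theorem piLower_not_exact_general {X : Type*} [Fintype X] [DecidableEq X]
    (hX : 2 ≤ Fintype.card X)
    (m n : X → ℝ) (hm0 : ∀ x, 0 ≤ m x)
    (hm1 : (∑ x : X, m x) = 1) (hn1 : (∑ x : X, n x) = 1) (hmn : m ≠ n)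
    (μ ν : Finset X → ℝ)
    (hμ : ∀ A : Finset X, μ A = ∑ x ∈ A, m x)
    (hν : ∀ A : Finset X, ν A = ∑ x ∈ A, n x)
    (D : Finset (X × X)) (hD : D = Finset.univ.filter (fun p => p.1 = p.2)) :
    max (μ (tprojX Dᶜ)) (ν (tprojY Dᶜ)) = 0 ∧
      (∀ w : X × X → ℝ, (∀ z, 0 ≤ w z) → InPiA m n w → 0 < ∑ z ∈ Dᶜ, w z) ∧
      (∃ S : Finset (X × X), S.Nonempty ∧
        ∀ p : X × X → ℝ,
          InCore (fun N : Finset (X × X) => max (μ (tprojX N)) (ν (tprojY N))) p →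
            (∑ z ∈ S, p z) ≠ max (μ (tprojX S)) (ν (tprojY S))) := by
  have : Nonempty X := Fintype.card_pos_iff.1 (by omega)
  have hcap : ∀ N, max (μ (tprojX N)) (ν (tprojY N)) = piLower m n N := fun N => by
    rw [hμ, hν, piLower]
  have hDc : Dᶜ = univ.offDiag := by
    ext z; simp [hD]
  simp only [hcap, hDc]
  refine ⟨piLower_offDiag m n, fun w hw0 hw => hw.sum_offDiag_pos hw0 hmn, univ.offDiag, ?_,
    fun p hp => ?_⟩
  · obtain ⟨x, y, hxy⟩ := Fintype.exists_pair_of_one_lt_card hX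
    exact ⟨(x, y), by simpa using hxy⟩
  · rw [piLower_offDiag]
    have hcoupling := hp.inPiA_of_piLower (hm1.trans hn1.symm)
    exact (hcoupling.sum_offDiag_pos (hp.nonneg_of_piLower hm0) hmn).ne'

/-- let `X` have at least two elements, let `m ≠ n` be probability weight
functions on `X` inducing additive capacities `μ`, `ν`, and let `D` be the diagonal of
`X × X`. Then `π_*(Dᶜ) = 0`, every nonnegative coupling `w ∈ Π_a(m, n)` has `w(Dᶜ) > 0`,
and `π_*` is not exact: there is a nonempty set `S` (namely `S = Dᶜ`) such that no core
element `p` of `π_*` satisfies `p(S) = π_*(S)`. -/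
theorem piLower_not_exact {X : Type*} [Fintype X] [DecidableEq X]
    (hX : 2 ≤ Fintype.card X)
    (m n : X → ℝ) (hm0 : ∀ x, 0 ≤ m x) (hn0 : ∀ x, 0 ≤ n x)
    (hm1 : (∑ x : X, m x) = 1) (hn1 : (∑ x : X, n x) = 1) (hmn : m ≠ n)
    (μ ν : Finset X → ℝ)
    (hμ : ∀ A : Finset X, μ A = ∑ x ∈ A, m x)
    (hν : ∀ A : Finset X, ν A = ∑ x ∈ A, n x)
    (D : Finset (X × X)) (hD : D = Finset.univ.filter (fun p => p.1 = p.2)) :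
    max (μ (tprojX Dᶜ)) (ν (tprojY Dᶜ)) = 0 ∧
      (∀ w : X × X → ℝ, (∀ z, 0 ≤ w z) → InPiA m n w → 0 < ∑ z ∈ Dᶜ, w z) ∧
      (∃ S : Finset (X × X), S.Nonempty ∧
        ∀ p : X × X → ℝ,
          InCore (fun N : Finset (X × X) => max (μ (tprojX N)) (ν (tprojY N))) p →
            (∑ z ∈ S, p z) ≠ max (μ (tprojX S)) (ν (tprojY S))) :=
  piLower_not_exact_general hX m n hm0 hm1 hn1 hmn μ ν hμ hν D hD
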